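/- arXiv:1910.04615 — 2 statements merged into one kernel-verified Lean document; each statement's English description precedes it below -/
import Mathlib

section
/- Let a_k = (cos(2πk/3), sin(2πk/3)) for k = 0, 1, 2 be three equidistant points on the unit circle in ℝ². For every real ε with √3/2 ≤ ε < 1, the learned space U_ε = ⋃_{k} closedBall(a_k, ε), equipped with the subspace topology of ℝ², is homotopy equivalent to the unit circle S¹ = {x ∈ ℝ² : ‖x‖ = 1}. -/
open Metric Real

/-- Three equidistant points on the unit circle in ℝ². -/
noncomputable def teachPoint (k : Fin 3) : EuclideanSpace ℝ (Fin 2) :=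
  WithLp.toLp 2 ![Real.cos (2 * π * k / 3), Real.sin (2 * π * k / 3)]

/-- The unit circle S¹ ⊆ ℝ². -/
def unitCircle : Set (EuclideanSpace ℝ (Fin 2)) := {x | ‖x‖ = 1}

/-!
Every direction makes an angle of at most π/3 with one of the three points, so the circle of
radius 1/2 lies in `U_ε` (each of its points is at distance at most √3/2 from some `a_k`), and
`0 ∉ U_ε` since `ε < 1`. For `x ∈ U_ε` the ball around the `a_k` closest to `x` contains both `x`
and its radial projection `x / (2‖x‖)`, hence the segment between them. The straight-line
homotopy along these segments deformation retracts `U_ε` onto the circle of radius 1/2.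
-/

open scoped RealInnerProductSpace ContinuousMap

theorem nonempty_homotopyEquiv_unitSphere_of_segment_subset {E : Type*} [NormedAddCommGroup E]
    [NormedSpace ℝ E] {S : Set E} {r : ℝ} (hr : 0 < r) (h0 : (0 : E) ∉ S)
    (hsphere : sphere (0 : E) r ⊆ S)
    (hseg : ∀ x ∈ S, segment ℝ x ((r / ‖x‖) • x) ⊆ S) :
    Nonempty (S ≃ₕ {x : E | ‖x‖ = 1}) := by
  have hne : ∀ x : S, ‖(x : E)‖ ≠ 0 := fun x => norm_ne_zero_iff.2 (ne_of_mem_of_not_mem x.2 h0)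
  let normalize : C(S, {x : E | ‖x‖ = 1}) :=
    ⟨fun x => ⟨‖(x : E)‖⁻¹ • (x : E), by simp [norm_smul, hne x]⟩, by fun_prop⟩
  let scale : C({x : E | ‖x‖ = 1}, S) :=
    ⟨fun u => ⟨r • (u : E), hsphere (by simp [norm_smul, abs_of_pos hr, u.2.out])⟩, by fun_prop⟩
  have h_normalize_scale : normalize.comp scale = .id _ := by
    ext u
    simp [normalize, scale, norm_smul, abs_of_pos hr, u.2.out, smul_smul, hr.ne']
  let radial : C(S, E) := ⟨fun x => (r / ‖(x : E)‖) • (x : E), by fun_prop (disch := exact hne)⟩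
  let straightLine := ContinuousMap.Homotopy.affine ⟨((↑) : S → E), continuous_subtype_val⟩ radial
  let deformation : (ContinuousMap.id S).Homotopy (scale.comp normalize) :=
    { toFun p := ⟨straightLine p, hseg _ p.2.2 (lineMap_mem_segment ℝ _ _ p.1.2)⟩
      continuous_toFun := by fun_prop
      map_zero_left x := by ext; simp [straightLine]
      map_one_left x := by ext; simp [straightLine, radial, scale, normalize, smul_smul, div_eq_mul_inv] }
  exact ⟨⟨normalize, scale, ⟨deformation.symm⟩, h_normalize_scale ▸ .refl _⟩⟩

lemma dist_sq_eq_of_norm_eq_one {E : Type*} [NormedAddCommGroup E] [InnerProductSpace ℝ E]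
    (x : E) {a : E} (ha : ‖a‖ = 1) : dist x a ^ 2 = ‖x‖ ^ 2 - 2 * ⟪x, a⟫ + 1 := by
  rw [dist_eq_norm, norm_sub_sq_real, ha, one_pow]

lemma le_sqrt_three_mul_sub_of_sq_add_sq_eq {a b r : ℝ} (h : a ^ 2 + b ^ 2 = r ^ 2)
    (ha : a ≤ r / 2) (hb : 0 ≤ b) : r ≤ √3 * b - a := by
  have h3 : √3 ^ 2 = 3 := Real.sq_sqrt (by norm_num)
  nlinarith [sq_nonneg (√3 * b - (r + a)), sq_nonneg (a + r), mul_nonneg (Real.sqrt_nonneg 3) hb,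
    sq_nonneg (a - r)]

lemma norm_teachPoint (k : Fin 3) : ‖teachPoint k‖ = 1 := by
  simp [teachPoint, EuclideanSpace.norm_eq, Fin.sum_univ_two]

lemma inner_teachPoint (x : EuclideanSpace ℝ (Fin 2)) (k : Fin 3) :
    ⟪x, teachPoint k⟫ = x 0 * cos (2 * π * k / 3) + x 1 * sin (2 * π * k / 3) := by
  simp [teachPoint, PiLp.inner_apply, Fin.sum_univ_two, mul_comm]

lemma exists_half_norm_le_inner_teachPoint (x : EuclideanSpace ℝ (Fin 2)) :
    ∃ k, ‖x‖ / 2 ≤ ⟪x, teachPoint k⟫ := by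
  have hx : x 0 ^ 2 + x 1 ^ 2 = ‖x‖ ^ 2 := by
    simp [EuclideanSpace.real_norm_sq_eq, Fin.sum_univ_two]
  have hcos : cos (2 * π / 3) = -(1 / 2) := by
    rw [show 2 * π / 3 = π - π / 3 by ring, cos_pi_sub, cos_pi_div_three]
  have hsin : sin (2 * π / 3) = √3 / 2 := by
    rw [show 2 * π / 3 = π - π / 3 by ring, sin_pi_sub, sin_pi_div_three]
  have h2 : 2 * π * 2 / 3 = 2 * π - 2 * π / 3 := by ring
  rcases le_or_gt (‖x‖ / 2) (x 0) with h0 | h0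
  · exact ⟨0, by simpa [inner_teachPoint] using h0⟩
  rcases le_total 0 (x 1) with h1 | h1
  · have := le_sqrt_three_mul_sub_of_sq_add_sq_eq hx h0.le h1
    refine ⟨1, ?_⟩
    simp [inner_teachPoint, hcos, hsin]
    linarith
  · have := le_sqrt_three_mul_sub_of_sq_add_sq_eq (b := -x 1) (by linarith) h0.le (by linarith)
    refine ⟨2, ?_⟩
    simp [inner_teachPoint, h2, hcos, hsin]
    linarith

section TeachingBalls

variable {ε : ℝ}

lemma zero_notMem_iUnion_closedBall_teachPoint (hε : ε < 1) :
    (0 : EuclideanSpace ℝ (Fin 2)) ∉ ⋃ k, closedBall (teachPoint k) ε := by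
  simp [dist_comm, norm_teachPoint, hε]

lemma mem_closedBall_teachPoint_of_norm_eq_half (hε : √3 / 2 ≤ ε) {y : EuclideanSpace ℝ (Fin 2)}
    {k : Fin 3} (hy : ‖y‖ = 1 / 2) (hk : 1 / 4 ≤ ⟪y, teachPoint k⟫) :
    y ∈ closedBall (teachPoint k) ε := by
  have hd := dist_sq_eq_of_norm_eq_one y (norm_teachPoint k)
  have h3 : (√3 / 2) ^ 2 = 3 / 4 := by rw [div_pow, Real.sq_sqrt (by norm_num)]; norm_num
  refine mem_closedBall.2 (le_trans ?_ hε)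
  exact le_of_sq_le_sq (by rw [hd, hy, h3]; linarith) (by positivity)

lemma sphere_half_subset_iUnion_closedBall_teachPoint (hε : √3 / 2 ≤ ε) :
    sphere 0 (1 / 2) ⊆ ⋃ k, closedBall (teachPoint k) ε := by
  intro y hy
  rw [mem_sphere_zero_iff_norm] at hy
  obtain ⟨k, hk⟩ := exists_half_norm_le_inner_teachPoint y
  exact Set.mem_iUnion.2 ⟨k, mem_closedBall_teachPoint_of_norm_eq_half hε hy (by linarith)⟩

lemma segment_subset_iUnion_closedBall_teachPoint (hε₁ : √3 / 2 ≤ ε) (hε₂ : ε < 1)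
    {x : EuclideanSpace ℝ (Fin 2)} (hx : x ∈ ⋃ k, closedBall (teachPoint k) ε) :
    segment ℝ x ((1 / 2 / ‖x‖) • x) ⊆ ⋃ k, closedBall (teachPoint k) ε := by
  have hx0 : 0 < ‖x‖ :=
    norm_pos_iff.2 (ne_of_mem_of_not_mem hx (zero_notMem_iUnion_closedBall_teachPoint hε₂))
  obtain ⟨j, hj⟩ := Set.mem_iUnion.1 hx
  obtain ⟨k, hk⟩ := Finite.exists_max fun k => ⟪x, teachPoint k⟫
  have hxk : x ∈ closedBall (teachPoint k) ε := by
    refine mem_closedBall.2 (le_trans (le_of_sq_le_sq ?_ dist_nonneg) (mem_closedBall.1 hj))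
    rw [dist_sq_eq_of_norm_eq_one x (norm_teachPoint k),
      dist_sq_eq_of_norm_eq_one x (norm_teachPoint j)]
    linarith [hk j]
  have hyk : (1 / 2 / ‖x‖) • x ∈ closedBall (teachPoint k) ε := by
    obtain ⟨i, hi⟩ := exists_half_norm_le_inner_teachPoint x
    refine mem_closedBall_teachPoint_of_norm_eq_half hε₁ ?_ ?_
    · rw [norm_smul, Real.norm_of_nonneg (by positivity)]
      field_simp
    · rw [real_inner_smul_left, div_mul_eq_mul_div, le_div_iff₀ hx0]
      linarith [hk i]
  exact fun z hz => Set.mem_iUnion.2 ⟨k, (convex_closedBall _ _).segment_subset hxk hyk hz⟩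

end TeachingBalls

theorem stmt_0 (ε : ℝ) (hε₁ : Real.sqrt 3 / 2 ≤ ε) (hε₂ : ε < 1) :
    Nonempty
      (ContinuousMap.HomotopyEquiv
        (↥(⋃ k : Fin 3, closedBall (teachPoint k) ε)) (↥unitCircle)) :=
  nonempty_homotopyEquiv_unitSphere_of_segment_subset (by norm_num : (0 : ℝ) < 1 / 2)
    (zero_notMem_iUnion_closedBall_teachPoint hε₂)
    (sphere_half_subset_iUnion_closedBall_teachPoint hε₁)
    fun _ hx => segment_subset_iUnion_closedBall_teachPoint hε₁ hε₂ hx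
end

section
/- For every natural number n, every subset D of ℝⁿ (Euclidean n-space) with at most two elements, and every ε > 0, the union ⋃_{x∈D} closedBall(x, ε), equipped with the subspace topology, is not homotopy equivalent to the unit circle S¹ = {x ∈ ℝ² : ‖x‖ = 1}. -/
open Metric Real

/-!
A space homotopy equivalent to S¹ is path-connected, and a path-connected union of at most two
closed balls is contractible: if the balls meet it is star-shaped about a common point, and if
they are disjoint, connectedness forces it to be a single ball. But S¹ is not contractible, since
the loop `t ↦ exp (2πit)` lifts through the covering `exp : ℝ → S¹` to a path from `0` to `2π`,
while a null-homotopic loop lifts to a closed path.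
-/

theorem Circle.not_simplyConnectedSpace : ¬ SimplyConnectedSpace Circle := by
  intro _
  have cov := Circle.isCoveringMap_exp
  let turn : C(unitInterval, ℝ) := ⟨fun t => 2 * π * t, by fun_prop⟩
  let loop : Path (1 : Circle) 1 :=
    { toContinuousMap := Circle.exp.comp turn
      source' := by simp [turn]
      target' := by simp [turn] }
  have hloop : cov.liftPath loop.toContinuousMap 0 (by simp) = turn :=
    ((cov.eq_liftPath_iff' _).2 ⟨rfl, by simp [turn]⟩).symm
  have hrefl : cov.liftPath (Path.refl (1 : Circle)).toContinuousMap 0 (by simp) =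
      ContinuousMap.const _ 0 :=
    cov.liftPath_const Circle.exp_zero.symm
  have hends := cov.liftPath_apply_one_eq_of_homotopicRel
    (SimplyConnectedSpace.paths_homotopic loop (Path.refl 1)) 0 (by simp) (by simp)
  rw [hloop, hrefl] at hends
  simp [turn] at hends

noncomputable def unitCircleHomeomorphCircle : unitCircle ≃ₜ Circle :=
  Complex.orthonormalBasisOneI.repr.symm.toHomeomorph.subtype fun x => by
    change ‖x‖ = 1 ↔ _ ∈ sphere (0 : ℂ) 1
    rw [mem_sphere_zero_iff_norm, LinearIsometryEquiv.coe_toHomeomorph,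
      LinearIsometryEquiv.norm_map]

theorem ContinuousMap.HomotopyEquiv.pathConnectedSpace {X Y : Type*} [TopologicalSpace X]
    [TopologicalSpace Y] [PathConnectedSpace Y] (e : ContinuousMap.HomotopyEquiv X Y) :
    PathConnectedSpace X := by
  obtain ⟨H⟩ := e.left_inv
  have hjoin (x : X) : Joined (e.invFun (e.toFun x)) x := ⟨H.evalAt x⟩
  refine ⟨⟨e.invFun (Classical.arbitrary Y)⟩, fun x y => ?_⟩
  exact ((hjoin x).symm.trans ((PathConnectedSpace.joined _ _).map e.invFun.continuous)).trans
    (hjoin y)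

theorem Convex.contractibleSpace_union {E : Type*} [AddCommGroup E] [Module ℝ E]
    [TopologicalSpace E] [ContinuousAdd E] [ContinuousSMul ℝ E] {s t : Set E}
    (hs : Convex ℝ s) (ht : Convex ℝ t) (hs' : IsClosed s) (ht' : IsClosed t)
    (hst : IsPreconnected (s ∪ t)) (hne : (s ∪ t).Nonempty) : ContractibleSpace ↥(s ∪ t) := by
  by_cases hmeet : (s ∩ t).Nonempty
  · obtain ⟨p, hps, hpt⟩ := hmeet
    exact ((hs.starConvex hps).union (ht.starConvex hpt)).contractibleSpace hne
  have hdisj : (s ∪ t) ∩ (s ∩ t) = ∅ := by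
    rw [Set.not_nonempty_iff_eq_empty.1 hmeet, Set.inter_empty]
  rcases isPreconnected_iff_subset_of_disjoint_closed.1 hst s t hs' ht' subset_rfl hdisj with
    h | h
  · rw [Set.union_eq_left.2 (Set.union_subset_iff.1 h).2] at hne ⊢
    exact hs.contractibleSpace hne
  · rw [Set.union_eq_right.2 (Set.union_subset_iff.1 h).1] at hne ⊢
    exact ht.contractibleSpace hne

theorem Set.eq_empty_or_exists_eq_pair_of_encard_le_two {α : Type*} {s : Set α}
    (hs : s.encard ≤ 2) : s = ∅ ∨ ∃ x y, s = {x, y} := by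
  rcases hs.lt_or_eq with hlt | heq
  · rcases Set.encard_le_one_iff_eq.1 (Order.le_of_lt_add_one (by rwa [one_add_one_eq_two]))
      with h | ⟨x, rfl⟩
    · exact .inl h
    · exact .inr ⟨x, x, (Set.pair_eq_singleton x).symm⟩
  · obtain ⟨x, y, -, rfl⟩ := Set.encard_eq_two.1 heq
    exact .inr ⟨x, y, rfl⟩

theorem stmt_2_general (n : ℕ) (D : Set (EuclideanSpace ℝ (Fin n))) (hD : D.encard ≤ 2)
    (ε : ℝ) :
    ¬ Nonempty (ContinuousMap.HomotopyEquiv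
        (↥(⋃ x ∈ D, closedBall x ε)) (↥unitCircle)) := by
  rintro ⟨e⟩
  have := unitCircleHomeomorphCircle.toHomotopyEquiv.pathConnectedSpace
  have := e.pathConnectedSpace
  have hconn : IsPreconnected (⋃ x ∈ D, closedBall x ε) :=
    isPreconnected_iff_preconnectedSpace.2 inferInstance
  have hne : (⋃ x ∈ D, closedBall x ε).Nonempty := Set.nonempty_coe_sort.1 inferInstance
  rcases Set.eq_empty_or_exists_eq_pair_of_encard_le_two hD with rfl | ⟨x, y, rfl⟩
  · simp at hne
  have : ContractibleSpace ↥(⋃ z ∈ ({x, y} : Set _), closedBall z ε) := by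
    rw [Set.biUnion_pair] at hconn hne ⊢
    exact (convex_closedBall x ε).contractibleSpace_union (convex_closedBall y ε)
      isClosed_closedBall isClosed_closedBall hconn hne
  have := e.symm.contractibleSpace
  have := unitCircleHomeomorphCircle.symm.contractibleSpace
  exact Circle.not_simplyConnectedSpace inferInstance

theorem stmt_2 (n : ℕ) (D : Set (EuclideanSpace ℝ (Fin n))) (hD : D.encard ≤ 2)
    (ε : ℝ) (hε : 0 < ε) :
    ¬ Nonempty (ContinuousMap.HomotopyEquiv
        (↥(⋃ x ∈ D, closedBall x ε)) (↥unitCircle)) :=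
  stmt_2_general n D hD ε
end
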